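/- Every full subgraph of an admissible simplicial graph is admissible. That is, if Γ is an admissible simplicial graph and A ⊆ V(Γ), then the full subgraph Γ_A of Γ spanned by A is admissible. -/

import Mathlib

namespace QM

variable {ι : Type*}

/-- The defining relators of the graph product: the multiplication tables of the vertex
groups and the commutators between adjacent vertex groups. -/
def gpRels (Γ : SimpleGraph ι) (Gv : ι → Type*) [∀ v, Group (Gv v)] :
    Set (FreeGroup (Σ v : ι, Gv v)) :=
  {r | (∃ (v : ι) (g h : Gv v),
          r = FreeGroup.of (⟨v, g⟩ : Σ v, Gv v) * FreeGroup.of (⟨v, h⟩ : Σ v, Gv v) *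
              (FreeGroup.of (⟨v, g * h⟩ : Σ v, Gv v))⁻¹) ∨
       (∃ (v w : ι) (g : Gv v) (h : Gv w), Γ.Adj v w ∧
          r = FreeGroup.of (⟨v, g⟩ : Σ v, Gv v) * FreeGroup.of (⟨w, h⟩ : Σ v, Gv v) *
              (FreeGroup.of (⟨v, g⟩ : Σ v, Gv v))⁻¹ * (FreeGroup.of (⟨w, h⟩ : Σ v, Gv v))⁻¹)}

/-- The graph product of the groups `Gv v` over the simplicial graph `Γ`. -/
def GraphProduct (Γ : SimpleGraph ι) (Gv : ι → Type*) [∀ v, Group (Gv v)] :=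
  PresentedGroup (gpRels Γ Gv)

instance (Γ : SimpleGraph ι) (Gv : ι → Type*) [∀ v, Group (Gv v)] :
    Group (GraphProduct Γ Gv) := by
  unfold GraphProduct; infer_instance

/-- The canonical image of an element of a vertex group in the graph product. -/
def gpOf (Γ : SimpleGraph ι) (Gv : ι → Type*) [∀ v, Group (Gv v)] (v : ι) (g : Gv v) :
    GraphProduct Γ Gv :=
  PresentedGroup.of (⟨v, g⟩ : Σ v, Gv v)

/-- The Cayley graph of the graph product `Γ𝒢` with respect to the generating set consisting
of all non-identity elements of the vertex groups (with edges `(x, s·x)`). -/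
def gpCayley (Γ : SimpleGraph ι) (Gv : ι → Type*) [∀ v, Group (Gv v)] :
    SimpleGraph (GraphProduct Γ Gv) :=
  SimpleGraph.fromRel (fun x y => ∃ (v : ι) (g : Gv v), g ≠ 1 ∧ y = gpOf Γ Gv v g * x)

end QM

namespace QM

/-- The solution set in `G` of a system of equations `S ⊆ F_n`. -/
def solutionSet (G : Type*) [Group G] {n : ℕ} (S : Set (FreeGroup (Fin n))) :
    Set (Fin n → G) :=
  {g : Fin n → G | ∀ s ∈ S, FreeGroup.lift g s = 1}

/-- A group is equationally noetherian if every system of equations is equivalent to a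
finite subsystem. -/
def IsEquationallyNoetherian (G : Type*) [Group G] : Prop :=
  ∀ (n : ℕ) (S : Set (FreeGroup (Fin n))), ∃ S₀ : Set (FreeGroup (Fin n)),
    S₀ ⊆ S ∧ S₀.Finite ∧ solutionSet G S₀ = solutionSet G S

end QM

namespace QM

universe u

/-- The subgroup of the graph product generated by the vertex groups `G_w` with `w`
adjacent to `v` (the "link subgroup" of `v`). -/
def linkSubgroup {ι : Type*} (Γ : SimpleGraph ι) (Gv : ι → Type*) [∀ v, Group (Gv v)]
    (v : ι) : Subgroup (GraphProduct Γ Gv) :=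
  Subgroup.closure {x : GraphProduct Γ Gv | ∃ (w : ι) (g : Gv w), Γ.Adj v w ∧ x = gpOf Γ Gv w g}

/-- A homomorphism from a finitely generated free group (with its standard basis) to a
graph product is linking if each basis element is sent into a link subgroup. -/
def IsLinking {ι : Type*} (Γ : SimpleGraph ι) (Gv : ι → Type*) [∀ v, Group (Gv v)]
    {m : ℕ} (φ : FreeGroup (Fin m) →* GraphProduct Γ Gv) : Prop :=
  ∀ s : Fin m, ∃ v : ι, φ (FreeGroup.of s) ∈ linkSubgroup Γ Gv v

/-- A simplicial graph `Γ` is admissible (with respect to the ultrafilter `ω`) if for every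
collection of non-trivial equationally noetherian vertex groups and every sequence of
linking homomorphisms `φᵢ : F → Γ𝒢` from a finitely generated free group, the `φᵢ` factor
through the `ω`-kernel `F_ω = {f | φᵢ(f) = 1 ω-almost surely}` `ω`-almost surely. -/
def IsAdmissible {ι : Type*} (Γ : SimpleGraph ι) (ω : Ultrafilter ℕ) : Prop :=
  ∀ (Gv : ι → Type u) [∀ v, Group (Gv v)],
    (∀ v, Nontrivial (Gv v)) → (∀ v, IsEquationallyNoetherian (Gv v)) →
    ∀ (m : ℕ) (φ : ℕ → (FreeGroup (Fin m) →* GraphProduct Γ Gv)),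
      (∀ i, IsLinking Γ Gv (φ i)) →
      {i : ℕ | ∀ f : FreeGroup (Fin m), {j : ℕ | φ j f = 1} ∈ ω → φ i f = 1} ∈ ω

end QM

/-!
Extend a family of vertex groups over `A` to all of `Γ` by `ℤ/2` at the vertices outside `A`;
`ℤ/2` is finite, hence equationally noetherian. The graph product over `Γ_A` is a retract of the
one over `Γ`, so the inclusion is injective and maps link subgroups into link subgroups. Composing
with it turns linking homomorphisms into `Γ_A 𝒢` into linking homomorphisms into `Γ 𝒢` that kill
exactly the same elements, and admissibility of `Γ` applies.
-/

namespace QM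

section EquationallyNoetherian

variable {G K : Type*} [Group G] [Group K]

theorem solutionSet_anti {n : ℕ} {S T : Set (FreeGroup (Fin n))} (h : S ⊆ T) :
    solutionSet G T ⊆ solutionSet G S :=
  fun _ hg s hs => hg s (h hs)

theorem solutionSet_eq_preimage {n : ℕ} {f : G →* K} (hf : Function.Injective f)
    (S : Set (FreeGroup (Fin n))) :
    solutionSet G S = (fun g => f ∘ g) ⁻¹' solutionSet K S := by
  have hlift : ∀ (g : Fin n → G) (s : FreeGroup (Fin n)),
      FreeGroup.lift (f ∘ g) s = f (FreeGroup.lift g s) := fun g s => by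
    rw [← MonoidHom.comp_apply]
    congr 1
    ext
    simp
  ext g
  simp only [solutionSet, Set.mem_ofPred_eq, Set.mem_preimage, hlift, map_eq_one_iff f hf]

theorem IsEquationallyNoetherian.of_mulEquiv (e : G ≃* K) (hG : IsEquationallyNoetherian G) :
    IsEquationallyNoetherian K := by
  intro n S
  obtain ⟨S₀, hS₀S, hS₀fin, hsol⟩ := hG n S
  have he := solutionSet_eq_preimage (n := n) (f := e.symm.toMonoidHom) e.symm.injective
  exact ⟨S₀, hS₀S, hS₀fin, by rw [he, hsol, ← he]⟩

/-- Solution sets in a finite group satisfy the descending chain condition, so a finite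
subsystem with minimal solution set cuts out that of the whole system. -/
theorem isEquationallyNoetherian_of_finite [Finite G] : IsEquationallyNoetherian G := by
  intro n S
  obtain ⟨T, ⟨hTS, hTfin⟩, hmin⟩ :=
    (InvImage.wf (solutionSet G) wellFounded_lt).has_min {T | T ⊆ S ∧ T.Finite}
      ⟨∅, Set.empty_subset S, Set.finite_empty⟩
  refine ⟨T, hTS, hTfin, (solutionSet_anti hTS).antisymm' fun g hg s hs => ?_⟩
  have hins : solutionSet G (insert s T) = solutionSet G T :=
    (solutionSet_anti (Set.subset_insert s T)).eq_of_not_ssubset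
      (hmin _ ⟨Set.insert_subset hs hTS, hTfin.insert s⟩)
  exact (hins ▸ hg) s (Set.mem_insert s T)

end EquationallyNoetherian

namespace GraphProduct

variable {ι : Type*} {Γ : SimpleGraph ι} {G : ι → Type*} [∀ v, Group (G v)]
  {K : Type*} [Group K]

theorem mk_eq_one_of_mem_gpRels {r : FreeGroup (Σ v, G v)} (hr : r ∈ gpRels Γ G) :
    (PresentedGroup.mk (gpRels Γ G) r : GraphProduct Γ G) = 1 :=
  (QuotientGroup.eq_one_iff r).mpr (Subgroup.subset_normalClosure hr)

theorem gpOf_mul (v : ι) (g h : G v) : gpOf Γ G v (g * h) = gpOf Γ G v g * gpOf Γ G v h := by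
  have := mk_eq_one_of_mem_gpRels (Γ := Γ) (Or.inl ⟨v, g, h, rfl⟩)
  simp only [map_mul, map_inv, mul_inv_eq_one] at this
  exact this.symm

theorem gpOf_commute {v w : ι} (hvw : Γ.Adj v w) (g : G v) (h : G w) :
    Commute (gpOf Γ G v g) (gpOf Γ G w h) := by
  have := mk_eq_one_of_mem_gpRels (Or.inr ⟨v, w, g, h, hvw, rfl⟩)
  simp only [map_mul, map_inv, mul_inv_eq_iff_eq_mul] at this
  exact this

variable (Γ G) in
def ofHom (v : ι) : G v →* GraphProduct Γ G where
  toFun := gpOf Γ G v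
  map_one' := by simpa using (gpOf_mul (Γ := Γ) v (1 : G v) 1).symm
  map_mul' := gpOf_mul v

def lift (f : ∀ v, G v →* K) (hf : ∀ v w, Γ.Adj v w → ∀ g h, Commute (f v g) (f w h)) :
    GraphProduct Γ G →* K :=
  PresentedGroup.toGroup (f := fun x => f x.1 x.2) <| by
    rintro r (⟨v, g, h, rfl⟩ | ⟨v, w, g, h, hvw, rfl⟩)
    · simp
    · simpa [mul_inv_eq_one, mul_inv_eq_iff_eq_mul] using (hf v w hvw g h).eq

@[simp]
theorem lift_gpOf (f : ∀ v, G v →* K) (hf) (v : ι) (g : G v) :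
    lift (Γ := Γ) f hf (gpOf Γ G v g) = f v g :=
  PresentedGroup.toGroup.of _

@[ext]
theorem hom_ext {φ ψ : GraphProduct Γ G →* K}
    (h : ∀ v g, φ (gpOf Γ G v g) = ψ (gpOf Γ G v g)) : φ = ψ :=
  PresentedGroup.ext fun x => h x.1 x.2

end GraphProduct

section Induce

variable {ι : Type*} (Γ : SimpleGraph ι) (A : Set ι) {G : ι → Type*} [∀ v, Group (G v)]
  {H : A → Type*} [∀ v, Group (H v)] (e : ∀ v, H v ≃* G v)

def GraphProduct.ofInduce : GraphProduct (Γ.induce A) H →* GraphProduct Γ G :=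
  lift (fun v => (ofHom Γ G v).comp (e v).toMonoidHom) fun _ _ hvw _ _ =>
    gpOf_commute (SimpleGraph.comap_adj.mp hvw) _ _

open Classical in
noncomputable def GraphProduct.toInduce : GraphProduct Γ G →* GraphProduct (Γ.induce A) H :=
  lift (fun v => if hv : v ∈ A then (ofHom _ H ⟨v, hv⟩).comp (e ⟨v, hv⟩).symm.toMonoidHom else 1)
    fun v w hvw g h => by
      by_cases hv : v ∈ A
      · by_cases hw : w ∈ A
        · simp only [dif_pos hv, dif_pos hw]
          exact gpOf_commute (SimpleGraph.comap_adj.mpr hvw) _ _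
        · simp only [dif_neg hw, MonoidHom.one_apply, Commute.one_right]
      · simp only [dif_neg hv, MonoidHom.one_apply, Commute.one_left]

namespace GraphProduct

theorem toInduce_comp_ofInduce :
    (toInduce Γ A e).comp (ofInduce Γ A e) = MonoidHom.id _ := by
  ext v g
  simp [ofInduce, toInduce, ofHom]

theorem ofInduce_injective : Function.Injective (ofInduce Γ A e) :=
  Function.LeftInverse.injective (g := toInduce Γ A e)
    (DFunLike.congr_fun (toInduce_comp_ofInduce Γ A e))

theorem map_ofInduce_linkSubgroup_le (v : A) :
    (linkSubgroup (Γ.induce A) H v).map (ofInduce Γ A e) ≤ linkSubgroup Γ G v := by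
  rw [linkSubgroup, MonoidHom.map_closure]
  refine Subgroup.closure_mono ?_
  rintro _ ⟨_, ⟨w, g, hvw, rfl⟩, rfl⟩
  exact ⟨w, e w g, SimpleGraph.comap_adj.mp hvw, by simp [ofInduce, ofHom]⟩

end GraphProduct

theorem IsLinking.ofInduce_comp {m : ℕ} {φ : FreeGroup (Fin m) →* GraphProduct (Γ.induce A) H}
    (hφ : IsLinking (Γ.induce A) H φ) : IsLinking Γ G ((GraphProduct.ofInduce Γ A e).comp φ) :=
  fun s =>
    let ⟨v, hv⟩ := hφ s
    ⟨v, GraphProduct.map_ofInduce_linkSubgroup_le Γ A e v ⟨_, hv, rfl⟩⟩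

end Induce

section ExtendGroups

universe u

variable {ι : Type*} (A : Set ι) (H : A → Type u) [∀ v, Group (H v)]

open Classical in
-- Bundling in `GrpCat` lets a type and its group structure be chosen by cases together.
noncomputable def extendGroups (v : ι) : GrpCat.{u} :=
  if hv : v ∈ A then GrpCat.of (H ⟨v, hv⟩) else GrpCat.of (ULift (Multiplicative (ZMod 2)))

noncomputable def extendGroupsEquiv (v : A) : H v ≃* extendGroups A H v :=
  (CategoryTheory.eqToIso
    (show extendGroups A H v = GrpCat.of (H v) from dif_pos v.2)).symm.groupIsoToMulEquiv

noncomputable def extendGroupsEquivOfNotMem {v : ι} (hv : v ∉ A) :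
    ULift.{u} (Multiplicative (ZMod 2)) ≃* extendGroups A H v :=
  (CategoryTheory.eqToIso
    (show extendGroups A H v = GrpCat.of (ULift (Multiplicative (ZMod 2))) from
      dif_neg hv)).symm.groupIsoToMulEquiv

theorem nontrivial_extendGroups [∀ v, Nontrivial (H v)] (v : ι) :
    Nontrivial (extendGroups A H v) := by
  by_cases hv : v ∈ A
  · exact (extendGroupsEquiv A H ⟨v, hv⟩).toEquiv.symm.nontrivial
  · exact (extendGroupsEquivOfNotMem A H hv).toEquiv.symm.nontrivial

theorem isEquationallyNoetherian_extendGroups (hH : ∀ v, IsEquationallyNoetherian (H v))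
    (v : ι) : IsEquationallyNoetherian (extendGroups A H v) := by
  by_cases hv : v ∈ A
  · exact (hH ⟨v, hv⟩).of_mulEquiv (extendGroupsEquiv A H ⟨v, hv⟩)
  · exact isEquationallyNoetherian_of_finite.of_mulEquiv (extendGroupsEquivOfNotMem A H hv)

end ExtendGroups

theorem induce_admissible_general {ι : Type*} (Γ : SimpleGraph ι) (ω : Ultrafilter ℕ)
    (hadm : IsAdmissible.{u} Γ ω) (A : Set ι) :
    IsAdmissible.{u} (SimpleGraph.induce A Γ) ω := by
  intro H _ _ hHen m φ hφ
  let ψ := GraphProduct.ofInduce Γ A (G := fun v => extendGroups A H v) (extendGroupsEquiv A H)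
  have hψφ := hadm (fun v => extendGroups A H v) (nontrivial_extendGroups A H)
    (isEquationallyNoetherian_extendGroups A H hHen) m (fun i => ψ.comp (φ i))
    (fun i => IsLinking.ofInduce_comp Γ A _ (hφ i))
  simpa only [MonoidHom.comp_apply, map_eq_one_iff ψ (GraphProduct.ofInduce_injective Γ A _)]
    using hψφ

/-- **Lemma.** Every full subgraph of an admissible simplicial graph is admissible. -/
theorem induce_admissible {ι : Type*} (Γ : SimpleGraph ι) (ω : Ultrafilter ℕ)
    (hω : ∀ a : ℕ, (ω : Filter ℕ) ≠ pure a) (hadm : IsAdmissible.{u} Γ ω) (A : Set ι) :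
    IsAdmissible.{u} (SimpleGraph.induce A Γ) ω :=
  induce_admissible_general Γ ω hadm A

end QM
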